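/- For integers x ≠ y and α > 0, define the discrete Bessel kernel B^α(x,y) = √α · (J_x(2√α) J_{y+1}(2√α) − J_{x+1}(2√α) J_y(2√α)) / (x − y). Then B^α(x,y) = Σ_{k=1}^∞ J_{x+k}(2√α) · J_{y+k}(2√α). -/

import Mathlib

/-!
With `t = 2s`, the three-term recurrence `t (J_{n-1}(t) + J_{n+1}(t)) = 2n J_n(t)` at `n = x + 1`
and `n = y + 1` gives `B(x, y) = J_{x+1} J_{y+1} + B(x + 1, y + 1)` for the kernel
`B(x, y) = s (J_x J_{y+1} - J_{x+1} J_y) / (x - y)`, whose denominator is invariant under the shift.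
Telescoping, `B(x, y)` is the `N`-th partial sum of the series plus `B(x + N, y + N)`, and this tail
vanishes because `|J_n(t)| ≤ exp ((t/2)^2) |t/2|^|n| / |n|!`; the same bound makes `n ↦ J_n(t)`
absolutely summable over `ℤ`, so the series converges.
-/

open Filter Topology
open scoped Nat

/-- The Bessel function of the first kind of nonnegative integer order `n`. -/
noncomputable def besselJ (n : ℕ) (t : ℝ) : ℝ :=
  ∑' m : ℕ, (-1 : ℝ) ^ m * (t / 2) ^ (n + 2 * m) /
    ((Nat.factorial m : ℝ) * (Nat.factorial (n + m) : ℝ))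

/-- The Bessel function of the first kind of integer order, using `J_{-n} = (-1)^n J_n`. -/
noncomputable def besselJInt (n : ℤ) (t : ℝ) : ℝ :=
  if 0 ≤ n then besselJ n.toNat t else (-1 : ℝ) ^ (-n).toNat * besselJ (-n).toNat t

noncomputable def besselJTerm (n : ℕ) (t : ℝ) (m : ℕ) : ℝ :=
  (-1 : ℝ) ^ m * (t / 2) ^ (n + 2 * m) / ((m ! : ℝ) * ((n + m)! : ℝ))

lemma besselJ_eq_tsum (n : ℕ) (t : ℝ) : besselJ n t = ∑' m, besselJTerm n t m := rfl

lemma abs_besselJTerm_le (n : ℕ) (t : ℝ) (m : ℕ) :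
    |besselJTerm n t m| ≤ ((t / 2) ^ 2) ^ m / m ! * (|t / 2| ^ n / n !) := by
  have hfac : (m ! : ℝ) * n ! ≤ m ! * (n + m)! := by
    gcongr
    exact Nat.le_add_right n m
  rw [besselJTerm, abs_div, abs_mul, abs_pow, abs_neg, abs_one, one_pow, one_mul, abs_pow,
    pow_add, pow_mul, sq_abs, abs_of_pos (by positivity : (0 : ℝ) < m ! * (n + m)!),
    div_mul_div_comm, mul_comm (|t / 2| ^ n)]
  exact div_le_div_of_nonneg_left (by positivity) (by positivity) hfac

lemma summable_besselJTerm (n : ℕ) (t : ℝ) : Summable (besselJTerm n t) :=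
  .of_norm_bounded ((Real.summable_pow_div_factorial _).mul_right _) (abs_besselJTerm_le n t)

lemma abs_besselJ_le (n : ℕ) (t : ℝ) :
    |besselJ n t| ≤ Real.exp ((t / 2) ^ 2) * (|t / 2| ^ n / n !) := by
  have hs := (summable_besselJTerm n t).abs
  rw [besselJ_eq_tsum]
  calc |∑' m, besselJTerm n t m|
      ≤ ∑' m, |besselJTerm n t m| := norm_tsum_le_tsum_norm (f := besselJTerm n t) hs
    _ ≤ ∑' m, ((t / 2) ^ 2) ^ m / m ! * (|t / 2| ^ n / n !) :=
      hs.tsum_le_tsum (abs_besselJTerm_le n t) ((Real.summable_pow_div_factorial _).mul_right _)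
    _ = _ := by rw [tsum_mul_right, Real.exp_eq_exp_ℝ, NormedSpace.exp_eq_tsum_div]

lemma summable_abs_besselJ (t : ℝ) : Summable fun n : ℕ => |besselJ n t| :=
  ((Real.summable_pow_div_factorial _).mul_left _).of_nonneg_of_le (fun _ => abs_nonneg _)
    (fun n => abs_besselJ_le n t)

lemma besselJTerm_zero_recurrence (n : ℕ) (t : ℝ) :
    t * besselJTerm n t 0 = 2 * (n + 1) * besselJTerm (n + 1) t 0 := by
  simp only [besselJTerm, Nat.mul_zero, Nat.add_zero, Nat.factorial_succ, pow_succ]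
  push_cast
  field_simp

lemma besselJTerm_succ_recurrence (n : ℕ) (t : ℝ) (m : ℕ) :
    t * (besselJTerm n t (m + 1) + besselJTerm (n + 2) t m) =
      2 * (n + 1) * besselJTerm (n + 1) t (m + 1) := by
  simp only [besselJTerm, show n + 2 * (m + 1) = n + 2 * m + 2 by ring,
    show n + 2 + 2 * m = n + 2 * m + 2 by ring, show n + 1 + 2 * (m + 1) = n + 2 * m + 3 by ring,
    show n + (m + 1) = n + m + 1 by ring, show n + 2 + m = n + m + 2 by ring,
    show n + 1 + (m + 1) = n + m + 2 by ring, Nat.factorial_succ, pow_succ]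
  push_cast
  field_simp
  ring

lemma besselJ_recurrence (n : ℕ) (t : ℝ) :
    t * (besselJ n t + besselJ (n + 2) t) = 2 * (n + 1) * besselJ (n + 1) t := by
  have h₀ := summable_besselJTerm n t
  have h₁ := summable_besselJTerm (n + 1) t
  have h₂ := summable_besselJTerm (n + 2) t
  simp only [besselJ_eq_tsum]
  calc t * (∑' m, besselJTerm n t m + ∑' m, besselJTerm (n + 2) t m)
      = t * besselJTerm n t 0 +
          ∑' m, t * (besselJTerm n t (m + 1) + besselJTerm (n + 2) t m) := by
        rw [tsum_mul_left, ((summable_nat_add_iff 1).2 h₀).tsum_add h₂, h₀.tsum_eq_zero_add]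
        ring
    _ = 2 * (n + 1) * besselJTerm (n + 1) t 0 +
          ∑' m, 2 * (n + 1) * besselJTerm (n + 1) t (m + 1) := by
        simp only [besselJTerm_zero_recurrence, besselJTerm_succ_recurrence]
    _ = 2 * (n + 1) * ∑' m, besselJTerm (n + 1) t m := by
        rw [h₁.tsum_eq_zero_add, tsum_mul_left]
        ring

lemma besselJInt_natCast (p : ℕ) (t : ℝ) : besselJInt p t = besselJ p t := by
  simp [besselJInt]

lemma besselJInt_neg_natCast (p : ℕ) (t : ℝ) :
    besselJInt (-p) t = (-1 : ℝ) ^ p * besselJ p t := by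
  rcases p.eq_zero_or_pos with rfl | hp
  · simp [besselJInt]
  · simp [besselJInt, hp.ne']

lemma besselJInt_neg (n : ℤ) (t : ℝ) : besselJInt (-n) t = (-1 : ℝ) ^ n * besselJInt n t := by
  obtain ⟨p, rfl | rfl⟩ := Int.eq_nat_or_neg n
  · rw [besselJInt_neg_natCast, besselJInt_natCast, zpow_natCast]
  · rw [neg_neg, besselJInt_neg_natCast, besselJInt_natCast, zpow_neg, zpow_natCast, ← mul_assoc,
      inv_mul_cancel₀ (pow_ne_zero _ (by norm_num)), one_mul]

lemma abs_besselJInt (n : ℤ) (t : ℝ) : |besselJInt n t| = |besselJ n.natAbs t| := by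
  obtain ⟨p, rfl | rfl⟩ := Int.eq_nat_or_neg n
  · rw [besselJInt_natCast, Int.natAbs_natCast]
  · rw [besselJInt_neg_natCast, abs_mul, abs_pow, abs_neg, abs_one, one_pow, one_mul,
      Int.natAbs_neg, Int.natAbs_natCast]

lemma besselJInt_recurrence (m : ℤ) (t : ℝ) :
    t * (besselJInt (m - 1) t + besselJInt (m + 1) t) = 2 * m * besselJInt m t := by
  wlog hm : 0 ≤ m generalizing m
  · -- by `J_{-n} = (-1)^n J_n`, the recurrence at `-m` is `-(-1)^m` times the one at `m`
    have h := this (-m) (by omega)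
    rw [show -m - 1 = -(m + 1) by ring, show -m + 1 = -(m - 1) by ring, besselJInt_neg,
      besselJInt_neg, besselJInt_neg, zpow_add_one₀ (by norm_num), zpow_sub_one₀ (by norm_num)] at h
    set e : ℝ := (-1) ^ m
    have he : e * e = 1 := by rw [← zpow_add₀ (by norm_num), ← two_mul, zpow_mul]; norm_num
    push_cast at h
    linear_combination (-e) * h -
      (t * (besselJInt (m - 1) t + besselJInt (m + 1) t) - 2 * m * besselJInt m t) * he
  lift m to ℕ using hm
  rcases m with _ | p
  · rw [show ((0 : ℕ) : ℤ) - 1 = -1 by rfl, besselJInt_neg]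
    simp
  · have h := besselJ_recurrence p t
    rw [show ((p + 1 : ℕ) : ℤ) - 1 = p by push_cast; ring,
      show ((p + 1 : ℕ) : ℤ) + 1 = (p + 2 : ℕ) by push_cast; ring]
    simp only [besselJInt_natCast]
    push_cast
    exact h

lemma summable_abs_besselJInt (t : ℝ) : Summable fun n : ℤ => |besselJInt n t| :=
  .of_nat_of_neg (by simpa only [abs_besselJInt, Int.natAbs_natCast] using summable_abs_besselJ t)
    (by simpa only [abs_besselJInt, Int.natAbs_neg, Int.natAbs_natCast] using summable_abs_besselJ t)

lemma summable_abs_besselJInt_add (x : ℤ) (t : ℝ) :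
    Summable fun k : ℕ => |besselJInt (x + k) t| :=
  (summable_abs_besselJInt t).comp_injective ((add_right_injective x).comp Nat.cast_injective)

lemma tendsto_besselJInt_add_atTop (x : ℤ) (t : ℝ) :
    Tendsto (fun k : ℕ => besselJInt (x + k) t) atTop (𝓝 0) :=
  tendsto_zero_iff_abs_tendsto_zero _ |>.2 (summable_abs_besselJInt_add x t).tendsto_atTop_zero

lemma summable_besselJInt_mul_besselJInt (x y : ℤ) (t : ℝ) :
    Summable fun k : ℕ => besselJInt (x + k) t * besselJInt (y + k) t := by
  refine .of_norm_bounded_eventually_nat (summable_abs_besselJInt_add x t) ?_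
  filter_upwards [(tendsto_besselJInt_add_atTop y t).abs.eventually
    (ge_mem_nhds (by norm_num : |(0 : ℝ)| < 1))] with k hk
  rw [Real.norm_eq_abs, abs_mul]
  exact mul_le_of_le_one_right (abs_nonneg _) hk

/-- The discrete Bessel kernel `B^α(x, y)` with `s = √α`. -/
noncomputable def besselKernel (s : ℝ) (x y : ℤ) : ℝ :=
  s * (besselJInt x (2 * s) * besselJInt (y + 1) (2 * s) -
    besselJInt (x + 1) (2 * s) * besselJInt y (2 * s)) / ((x : ℝ) - (y : ℝ))

lemma besselKernel_eq_add_besselKernel_add_one (s : ℝ) {x y : ℤ} (hxy : x ≠ y) :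
    besselKernel s x y = besselJInt (x + 1) (2 * s) * besselJInt (y + 1) (2 * s) +
      besselKernel s (x + 1) (y + 1) := by
  have hx := besselJInt_recurrence (x + 1) (2 * s)
  have hy := besselJInt_recurrence (y + 1) (2 * s)
  have hxy' : (x : ℝ) - y ≠ 0 := sub_ne_zero.2 (Int.cast_injective.ne hxy)
  rw [add_sub_cancel_right] at hx hy
  simp only [besselKernel]
  push_cast at hx hy ⊢
  rw [show (x : ℝ) + 1 - (y + 1) = x - y by ring, add_div' _ _ _ hxy', div_left_inj' hxy']
  linear_combination (besselJInt (y + 1) (2 * s) / 2) * hx -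
    (besselJInt (x + 1) (2 * s) / 2) * hy

lemma besselKernel_eq_sum_add (s : ℝ) {x y : ℤ} (hxy : x ≠ y) (N : ℕ) :
    besselKernel s x y = ∑ k ∈ Finset.range N,
        besselJInt (x + k + 1) (2 * s) * besselJInt (y + k + 1) (2 * s) +
      besselKernel s (x + N) (y + N) := by
  induction N with
  | zero => simp
  | succ N ih =>
    rw [ih, besselKernel_eq_add_besselKernel_add_one s (by omega), Finset.sum_range_succ,
      Nat.cast_succ, ← add_assoc x, ← add_assoc y]
    ring

lemma tendsto_besselKernel_add_atTop (s : ℝ) (x y : ℤ) :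
    Tendsto (fun N : ℕ => besselKernel s (x + N) (y + N)) atTop (𝓝 0) := by
  have hJ := fun z => tendsto_besselJInt_add_atTop z (2 * s)
  have hJ₁ : ∀ z : ℤ, Tendsto (fun N : ℕ => besselJInt (z + N + 1) (2 * s)) atTop (𝓝 0) :=
    fun z => by simpa only [add_right_comm] using hJ (z + 1)
  have h := (((hJ x).mul (hJ₁ y)).sub ((hJ₁ x).mul (hJ y))).const_mul s |>.div_const ((x : ℝ) - y)
  simp only [mul_zero, sub_zero, zero_div] at h
  refine h.congr fun N => ?_
  simp only [besselKernel]
  push_cast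
  ring_nf

lemma hasSum_besselKernel (s : ℝ) {x y : ℤ} (hxy : x ≠ y) :
    HasSum (fun k : ℕ => besselJInt (x + k + 1) (2 * s) * besselJInt (y + k + 1) (2 * s))
      (besselKernel s x y) := by
  have hsum := summable_besselJInt_mul_besselJInt (x + 1) (y + 1) (2 * s)
  simp only [add_right_comm _ (1 : ℤ)] at hsum
  rw [hsum.hasSum_iff_tendsto_nat]
  have h := (tendsto_besselKernel_add_atTop s x y).const_sub (besselKernel s x y)
  rw [sub_zero] at h
  exact h.congr fun N => by linarith [besselKernel_eq_sum_add s hxy N]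

theorem discrete_bessel_kernel_series_general (α : ℝ) (x y : ℤ) (hxy : x ≠ y) :
    Real.sqrt α *
        (besselJInt x (2 * Real.sqrt α) * besselJInt (y + 1) (2 * Real.sqrt α) -
          besselJInt (x + 1) (2 * Real.sqrt α) * besselJInt y (2 * Real.sqrt α)) /
        ((x : ℝ) - (y : ℝ)) =
      ∑' k : ℕ, besselJInt (x + k + 1) (2 * Real.sqrt α) *
        besselJInt (y + k + 1) (2 * Real.sqrt α) :=
  (hasSum_besselKernel (Real.sqrt α) hxy).tsum_eq.symm

/-- for integers `x ≠ y` and `α > 0`, the discrete Bessel kernel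
`B^α(x,y) = √α (J_x J_{y+1} − J_{x+1} J_y)/(x − y)` (all Bessel functions at `2√α`)
equals `Σ_{k=1}^∞ J_{x+k}(2√α) J_{y+k}(2√α)`. -/
theorem discrete_bessel_kernel_series (α : ℝ) (hα : 0 < α) (x y : ℤ) (hxy : x ≠ y) :
    Real.sqrt α *
        (besselJInt x (2 * Real.sqrt α) * besselJInt (y + 1) (2 * Real.sqrt α) -
          besselJInt (x + 1) (2 * Real.sqrt α) * besselJInt y (2 * Real.sqrt α)) /
        ((x : ℝ) - (y : ℝ)) =
      ∑' k : ℕ, besselJInt (x + k + 1) (2 * Real.sqrt α) *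
        besselJInt (y + k + 1) (2 * Real.sqrt α) :=
  discrete_bessel_kernel_series_general α x y hxy
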